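/- For the tribonacci position sequences A, B, C (positions of 1, 0, 2 in the infinite tribonacci word), the composition B∘A satisfies B(A(k)) = A(k) + B(k) + k + 1 for all k ≥ 0; equivalently B(A(k)) = C(k) − 1. -/

import Mathlib

/-- The tribonacci substitution on letters: 0 ↦ 01, 1 ↦ 02, 2 ↦ 0. -/
def sigmaW : ℕ → List ℕ
  | 0 => [0, 1]
  | 1 => [0, 2]
  | _ => [0]

/-- The substitution extended to words (concatenation homomorphism). -/
def sigmaL (w : List ℕ) : List ℕ := w.flatMap sigmaW

/-- The infinite tribonacci word t = 0,1,0,2,0,1,0,0,1,0,2,...,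
the fixed point of the substitution starting from 0. -/
def t (n : ℕ) : ℕ := (sigmaL^[n + 1] [0]).getD n 0

/-- A(n): position of the (n+1)-st occurrence of the letter 1 in t. -/
noncomputable def A (n : ℕ) : ℕ := Nat.nth (fun k => t k = 1) n

/-- B(n): position of the (n+1)-st occurrence of the letter 0 in t. -/
noncomputable def B (n : ℕ) : ℕ := Nat.nth (fun k => t k = 0) n

/-- C(n): position of the (n+1)-st occurrence of the letter 2 in t. -/
noncomputable def C (n : ℕ) : ℕ := Nat.nth (fun k => t k = 2) n

/-!
Since `t` is the fixed point of `σ`, the image `σ(t 0 ⋯ t (n - 1))` is again a prefix of `t`, of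
length `blockStart n`. So `t` is the concatenation of the blocks `σ(t n)`, the `n`-th one starting
at position `blockStart n`. Every block starts with its only `0`, and its second letter is `1`
(resp. `2`) exactly when it is the image of a `0` (resp. `1`). Hence `B = blockStart`,
`A n = B (B n) + 1` and `C n = B (A n) + 1`. As `|σ 0| = |σ 1| = 2` and `|σ 2| = 1`,
`blockStart n = n + #0 + #1`, counting the letters of `t 0 ⋯ t (n - 1)`; applied at `n = A k`,
where `#0 = B k + 1` and `#1 = k`, this is the identity.
-/

lemma Nat.nth_eq_of_count_eq {p : ℕ → Prop} [DecidablePred p] {a n : ℕ} (ha : p a)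
    (hn : Nat.count p a = n) : Nat.nth p n = a :=
  hn ▸ Nat.nth_count ha

namespace Tribonacci

@[simp]
lemma sigmaL_nil : sigmaL [] = [] := rfl

@[simp]
lemma sigmaL_cons (a : ℕ) (l : List ℕ) : sigmaL (a :: l) = sigmaW a ++ sigmaL l := by
  simp [sigmaL]

lemma sigmaL_append (l₁ l₂ : List ℕ) : sigmaL (l₁ ++ l₂) = sigmaL l₁ ++ sigmaL l₂ := by
  simp [sigmaL]

lemma _root_.List.IsPrefix.sigmaL {l₁ l₂ : List ℕ} (h : l₁ <+: l₂) : sigmaL l₁ <+: sigmaL l₂ :=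
  h.flatMap sigmaW

lemma length_sigmaL (l : List ℕ) : (sigmaL l).length = l.length + l.count 0 + l.count 1 := by
  induction l with
  | nil => rfl
  | cons a l ih => rcases a with _ | _ | a <;> simp [sigmaW, ih] <;> omega

lemma count_zero_sigmaL (l : List ℕ) : (sigmaL l).count 0 = l.length := by
  induction l with
  | nil => rfl
  | cons a l ih => rcases a with _ | _ | a <;> simp [sigmaW, ih]

lemma count_one_sigmaL (l : List ℕ) : (sigmaL l).count 1 = l.count 0 := by
  induction l with
  | nil => rfl
  | cons a l ih => rcases a with _ | _ | a <;> simp [sigmaW, ih]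

lemma count_two_sigmaL (l : List ℕ) : (sigmaL l).count 2 = l.count 1 := by
  induction l with
  | nil => rfl
  | cons a l ih => rcases a with _ | _ | a <;> simp [sigmaW, ih]

lemma iterate_sigmaL_prefix_iterate_succ (n : ℕ) : sigmaL^[n] [0] <+: sigmaL^[n + 1] [0] := by
  induction n with
  | zero => exact ⟨[1], rfl⟩
  | succ n ih =>
    rw [Function.iterate_succ_apply' _ n, Function.iterate_succ_apply' _ (n + 1)]
    exact ih.sigmaL

lemma iterate_sigmaL_prefix_of_le {m n : ℕ} (h : m ≤ n) :
    sigmaL^[m] [0] <+: sigmaL^[n] [0] := by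
  induction n, h using Nat.le_induction with
  | base => exact List.prefix_refl _
  | succ n _ ih => exact ih.trans (iterate_sigmaL_prefix_iterate_succ n)

lemma lt_length_iterate_sigmaL (n : ℕ) : n < (sigmaL^[n] [0]).length := by
  induction n with
  | zero => simp
  | succ n ih =>
    have hzero : 0 < (sigmaL^[n] [0]).count 0 :=
      List.count_pos_iff.2 ((iterate_sigmaL_prefix_of_le n.zero_le).subset (by simp))
    rw [Function.iterate_succ_apply', length_sigmaL]
    omega

lemma t_eq_getElem_iterate_sigmaL {m i : ℕ} (hi : i < (sigmaL^[m] [0]).length) :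
    t i = (sigmaL^[m] [0])[i] := by
  have hi' : i < (sigmaL^[i + 1] [0]).length :=
    (lt_length_iterate_sigmaL (i + 1)).trans' i.lt_succ_self
  rw [t, List.getD_eq_getElem _ _ hi',
    (iterate_sigmaL_prefix_of_le (le_max_left (i + 1) m)).getElem hi',
    (iterate_sigmaL_prefix_of_le (le_max_right (i + 1) m)).getElem hi]

def tPrefix (n : ℕ) : List ℕ := (List.range n).map t

@[simp]
lemma length_tPrefix (n : ℕ) : (tPrefix n).length = n := by
  simp [tPrefix]

@[simp]
lemma getElem_tPrefix {n i : ℕ} (hi : i < (tPrefix n).length) : (tPrefix n)[i] = t i := by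
  simp [tPrefix]

lemma tPrefix_succ (n : ℕ) : tPrefix (n + 1) = tPrefix n ++ [t n] := by
  simp [tPrefix, List.range_succ]

lemma count_tPrefix (x n : ℕ) : (tPrefix n).count x = Nat.count (t · = x) n := by
  induction n with
  | zero => rfl
  | succ n ih => simp [tPrefix_succ, Nat.count_succ, List.count_singleton, ih]

lemma take_tPrefix (m n : ℕ) : (tPrefix n).take m = tPrefix (min m n) := by
  rw [tPrefix, ← List.map_take, List.take_range, tPrefix]

lemma tPrefix_prefix_of_le {m n : ℕ} (h : m ≤ n) : tPrefix m <+: tPrefix n := by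
  rw [← min_eq_left h, ← take_tPrefix]
  exact List.take_prefix m (tPrefix n)

lemma eq_tPrefix_of_prefix {l : List ℕ} {m : ℕ} (h : l <+: tPrefix m) :
    l = tPrefix l.length := by
  have hlen : l.length ≤ m := by simpa using h.length_le
  rw [List.prefix_iff_eq_take] at h
  nth_rw 1 [h]
  rw [take_tPrefix, min_eq_left hlen]

lemma iterate_sigmaL_eq_tPrefix (m : ℕ) : sigmaL^[m] [0] = tPrefix (sigmaL^[m] [0]).length :=
  List.ext_getElem (by simp) fun _ hi _ => by simp [t_eq_getElem_iterate_sigmaL hi]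

/-- `σ(t n)` occupies the positions `blockStart n, …, blockStart (n + 1) - 1` of `t`. -/
def blockStart (n : ℕ) : ℕ := (sigmaL (tPrefix n)).length

lemma sigmaL_tPrefix (n : ℕ) : sigmaL (tPrefix n) = tPrefix (blockStart n) := by
  have h : tPrefix n <+: sigmaL^[n] [0] := by
    rw [iterate_sigmaL_eq_tPrefix n]
    exact tPrefix_prefix_of_le (lt_length_iterate_sigmaL n).le
  have h' := h.sigmaL
  rw [← Function.iterate_succ_apply' sigmaL, iterate_sigmaL_eq_tPrefix] at h'
  exact eq_tPrefix_of_prefix h'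

lemma tPrefix_blockStart_succ (n : ℕ) :
    tPrefix (blockStart (n + 1)) = tPrefix (blockStart n) ++ sigmaW (t n) := by
  rw [← sigmaL_tPrefix, ← sigmaL_tPrefix, tPrefix_succ, sigmaL_append]
  simp

lemma t_blockStart_add {n j : ℕ} (hj : j < (sigmaW (t n)).length) :
    t (blockStart n + j) = (sigmaW (t n))[j] := by
  have h := tPrefix_blockStart_succ n
  have hlt : blockStart n + j < (tPrefix (blockStart (n + 1))).length := by
    rw [h, List.length_append, length_tPrefix]
    omega
  rw [← getElem_tPrefix hlt]
  simp [h, List.getElem_append_right]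

lemma t_blockStart (n : ℕ) : t (blockStart n) = 0 := by
  obtain ⟨w, hw⟩ : ∃ w, sigmaW (t n) = 0 :: w := by
    rcases t n with _ | _ | _ <;> exact ⟨_, rfl⟩
  simpa [hw] using t_blockStart_add (n := n) (j := 0) (by simp [hw])

lemma t_blockStart_add_one_of_eq_zero {n : ℕ} (h : t n = 0) : t (blockStart n + 1) = 1 := by
  simpa [h, sigmaW] using t_blockStart_add (n := n) (j := 1) (by simp [h, sigmaW])

lemma t_blockStart_add_one_of_eq_one {n : ℕ} (h : t n = 1) : t (blockStart n + 1) = 2 := by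
  simpa [h, sigmaW] using t_blockStart_add (n := n) (j := 1) (by simp [h, sigmaW])

lemma blockStart_eq_add_count (n : ℕ) :
    blockStart n = n + Nat.count (t · = 0) n + Nat.count (t · = 1) n := by
  rw [blockStart, length_sigmaL, length_tPrefix, count_tPrefix, count_tPrefix]

lemma count_zero_blockStart (n : ℕ) : Nat.count (t · = 0) (blockStart n) = n := by
  rw [← count_tPrefix, ← sigmaL_tPrefix, count_zero_sigmaL, length_tPrefix]

lemma count_one_blockStart (n : ℕ) :
    Nat.count (t · = 1) (blockStart n) = Nat.count (t · = 0) n := by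
  rw [← count_tPrefix, ← sigmaL_tPrefix, count_one_sigmaL, count_tPrefix]

lemma count_two_blockStart (n : ℕ) :
    Nat.count (t · = 2) (blockStart n) = Nat.count (t · = 1) n := by
  rw [← count_tPrefix, ← sigmaL_tPrefix, count_two_sigmaL, count_tPrefix]

lemma B_eq_blockStart (n : ℕ) : B n = blockStart n :=
  Nat.nth_eq_of_count_eq (t_blockStart n) (count_zero_blockStart n)

lemma t_B (n : ℕ) : t (B n) = 0 := by
  rw [B_eq_blockStart]
  exact t_blockStart n

lemma count_zero_B (n : ℕ) : Nat.count (t · = 0) (B n) = n := by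
  rw [B_eq_blockStart]
  exact count_zero_blockStart n

lemma t_B_B_add_one (n : ℕ) : t (B (B n) + 1) = 1 := by
  rw [B_eq_blockStart (B n)]
  exact t_blockStart_add_one_of_eq_zero (t_B n)

lemma count_one_B_B_add_one (n : ℕ) : Nat.count (t · = 1) (B (B n) + 1) = n := by
  rw [Nat.count_succ, if_neg (by simp [t_B]), B_eq_blockStart (B n), count_one_blockStart,
    count_zero_B, add_zero]

lemma A_eq_B_B_add_one (n : ℕ) : A n = B (B n) + 1 :=
  Nat.nth_eq_of_count_eq (t_B_B_add_one n) (count_one_B_B_add_one n)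

lemma count_zero_A (n : ℕ) : Nat.count (t · = 0) (A n) = B n + 1 := by
  rw [A_eq_B_B_add_one, Nat.count_succ, if_pos (t_B _), count_zero_B]

lemma count_one_A (n : ℕ) : Nat.count (t · = 1) (A n) = n := by
  rw [A_eq_B_B_add_one]
  exact count_one_B_B_add_one n

lemma t_A (n : ℕ) : t (A n) = 1 := by
  rw [A_eq_B_B_add_one]
  exact t_B_B_add_one n

lemma C_eq_B_A_add_one (n : ℕ) : C n = B (A n) + 1 := by
  refine Nat.nth_eq_of_count_eq ?_ ?_
  · rw [B_eq_blockStart]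
    exact t_blockStart_add_one_of_eq_one (t_A n)
  · rw [Nat.count_succ, if_neg (by simp [t_B]), B_eq_blockStart, count_two_blockStart,
      count_one_A, add_zero]

end Tribonacci

open Tribonacci in
/-- B(A(k)) = A(k) + B(k) + k + 1; equivalently B(A(k)) = C(k) − 1. -/
theorem B_comp_A (k : ℕ) : B (A k) = A k + B k + k + 1 ∧ B (A k) = C k - 1 := by
  refine ⟨?_, by rw [C_eq_B_A_add_one, Nat.add_sub_cancel]⟩
  rw [B_eq_blockStart, blockStart_eq_add_count, count_zero_A, count_one_A]
  ring
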